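/- If Δ is a {0,1}-valued random variable and Y a real random variable with E[Δ | X, Y] = p(X) almost surely (the MAR assumption), and p(X) > 0 a.s., then E[ΔY / p(X) | X] = E[Y | X] almost surely. -/

import Mathlib

/-!
Write `ΔY / p(X) = (Y / p(X)) · Δ`, where `Y / p(X)` is `σ(X, Y)`-measurable. By the tower
property and pulling out this known factor,
`E[ΔY / p(X) | X] = E[(Y / p(X)) · E[Δ | X, Y] | X] = E[(Y / p(X)) · p(X) | X] = E[Y | X]`.
-/

open MeasureTheory

namespace MeasureTheory

variable {Ω : Type*} {m m₀ : MeasurableSpace Ω} {μ : Measure Ω}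

/-- A non-integrable function has conditional expectation `0`, which cannot be a.e. positive. -/
theorem integrable_of_ae_pos_condExp [NeZero μ] {g : Ω → ℝ} (hg : ∀ᵐ ω ∂μ, 0 < μ[g | m] ω) :
    Integrable g μ := by
  by_contra h
  rw [condExp_of_not_integrable h] at hg
  simpa using hg.exists

theorem condExp_mul_ae_eq_of_condExp_ae_eq {m' : MeasurableSpace Ω} (hm : m ≤ m') (hm' : m' ≤ m₀)
    [SigmaFinite (μ.trim hm')] {f g h : Ω → ℝ} (hf : StronglyMeasurable[m'] f)
    (hfg : Integrable (f * g) μ) (hg : Integrable g μ) (hgh : μ[g | m'] =ᵐ[μ] h) :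
    μ[f * g | m] =ᵐ[μ] μ[f * h | m] := by
  have hinner : μ[f * g | m'] =ᵐ[μ] f * h := by
    filter_upwards [condExp_mul_of_stronglyMeasurable_left hf hfg hg, hgh] with ω hpull hω
    rw [hpull, Pi.mul_apply, hω, Pi.mul_apply]
  calc μ[f * g | m] =ᵐ[μ] μ[μ[f * g | m'] | m] := (condExp_condExp_of_le hm hm').symm
    _ =ᵐ[μ] μ[f * h | m] := condExp_congr_ae hinner

end MeasureTheory

theorem stmt_0_general {Ω : Type*} {m0 : MeasurableSpace Ω} (μ : Measure Ω) [IsProbabilityMeasure μ]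
    (mX mXY : MeasurableSpace Ω) (hXXY : mX ≤ mXY) (hXY : mXY ≤ m0)
    (Δ Y pX : Ω → ℝ)
    (hpXmeas : StronglyMeasurable[mX] pX)
    (hYmeas : StronglyMeasurable[mXY] Y)
    (hint : Integrable (fun ω => Δ ω * Y ω / pX ω) μ)
    (hpos : ∀ᵐ ω ∂μ, 0 < pX ω)
    (hMAR : μ[Δ | mXY] =ᵐ[μ] pX) :
    μ[(fun ω => Δ ω * Y ω / pX ω) | mX] =ᵐ[μ] μ[Y | mX] := by
  have hΔ : Integrable Δ μ := integrable_of_ae_pos_condExp (m := mXY) <| by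
    filter_upwards [hpos, hMAR] with ω hp hω
    rwa [hω]
  have hweight : (fun ω => Δ ω * Y ω / pX ω) = (fun ω => Y ω / pX ω) * Δ := by
    ext ω
    simp only [Pi.mul_apply]
    ring
  have hmeas : StronglyMeasurable[mXY] (fun ω => Y ω / pX ω) :=
    (hYmeas.measurable.div (hpXmeas.mono hXXY).measurable).stronglyMeasurable
  have hcancel : (fun ω => Y ω / pX ω) * pX =ᵐ[μ] Y := by
    filter_upwards [hpos] with ω hω
    simp [hω.ne']
  rw [hweight] at hint ⊢
  exact (condExp_mul_ae_eq_of_condExp_ae_eq hXXY hXY hmeas hint hΔ hMAR).trans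
    (condExp_congr_ae hcancel)

/-- Under MAR (E[Δ | X,Y] = p(X) a.s.) with p(X) > 0 a.s.,
E[ΔY / p(X) | X] = E[Y | X] a.s. Here mX is the σ-algebra generated by X and
mXY the one generated by (X, Y). -/
theorem stmt_0 {Ω : Type*} {m0 : MeasurableSpace Ω} (μ : Measure Ω) [IsProbabilityMeasure μ]
    (mX mXY : MeasurableSpace Ω) (hXXY : mX ≤ mXY) (hXY : mXY ≤ m0)
    (Δ Y pX : Ω → ℝ)
    (hΔ01 : ∀ ω, Δ ω = 0 ∨ Δ ω = 1)
    (hpXmeas : StronglyMeasurable[mX] pX)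
    (hYmeas : StronglyMeasurable[mXY] Y)
    (hYint : Integrable Y μ)
    (hint : Integrable (fun ω => Δ ω * Y ω / pX ω) μ)
    (hpos : ∀ᵐ ω ∂μ, 0 < pX ω)
    (hMAR : μ[Δ | mXY] =ᵐ[μ] pX) :
    μ[(fun ω => Δ ω * Y ω / pX ω) | mX] =ᵐ[μ] μ[Y | mX] :=
  stmt_0_general μ mX mXY hXXY hXY Δ Y pX hpXmeas hYmeas hint hpos hMAR
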